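/- If (u^ε, p^ε) is a sufficiently smooth decaying solution on ℝ³ × [0,T] of the system ∂_t u + ∇p = μΔu − (u·∇)u − (1/2)(div u)u, ε ∂_t p + div u = 0, then for all t ∈ [0,T] the energy identity E(t) + μ ∫₀ᵗ ∫_{ℝ³} |∇u(x,s)|² dx ds = E(0) holds, where E(t) = ∫_{ℝ³} ( |u(x,t)|²/2 + ε |p(x,t)|²/2 ) dx. -/

import Mathlib

open MeasureTheory Set
open scoped ENNReal

open scoped RealInnerProductSpace

lemma aux_integral_fderiv_eq_zero {E : Type*} [NormedAddCommGroup E] [NormedSpace ℝ E]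
    [MeasurableSpace E] [BorelSpace E] [FiniteDimensional ℝ E]
    {μ : Measure E} [μ.IsAddHaarMeasure]
    {f : E → ℝ} (hf : ContDiff ℝ 1 f) (h2f : HasCompactSupport f) (v : E) :
    ∫ x, fderiv ℝ f x v ∂μ = 0 := by
  obtain ⟨C, hC⟩ := ContDiff.lipschitzWith_of_hasCompactSupport h2f hf one_ne_zero
  have key := LipschitzWith.integral_lineDeriv_mul_eq (μ := μ)
    (LipschitzWith.const' (1:ℝ) (K := 0)) hC h2f (-v)
  have hlc : ∀ (x w : E), lineDeriv ℝ (fun _ => (1:ℝ)) x w = 0 := by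
    intro x w; simp [lineDeriv]
  simp only [hlc, zero_mul, integral_zero, neg_neg, mul_one] at key
  have : ∀ x, lineDeriv ℝ f x v = fderiv ℝ f x v := fun x =>
    ((hf.differentiable one_ne_zero).differentiableAt).lineDeriv_eq_fderiv
  rw [← integral_congr_ae (Filter.Eventually.of_forall this)]
  exact key.symm

noncomputable def acPhi (μ : ℝ) (v : EuclideanSpace ℝ (Fin 3) → EuclideanSpace ℝ (Fin 3))
    (q : EuclideanSpace ℝ (Fin 3) → ℝ) (j : Fin 3) (y : EuclideanSpace ℝ (Fin 3)) : ℝ :=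
  q y * (v y) j + (1/2 : ℝ) * ⟪v y, v y⟫ * (v y) j
    - μ * ⟪v y, fderiv ℝ v y (EuclideanSpace.single j 1)⟫

variable {μ : ℝ} {v : EuclideanSpace ℝ (Fin 3) → EuclideanSpace ℝ (Fin 3)}
    {q : EuclideanSpace ℝ (Fin 3) → ℝ} {j : Fin 3}

lemma acPhi_deriv_contDiff (hv : ContDiff ℝ 2 v) :
    ContDiff ℝ 1 (fun y => fderiv ℝ v y (EuclideanSpace.single j 1)) :=
  (hv.fderiv_right (m := 1) (by norm_num)).clm_apply contDiff_const

lemma acPhi_coord_contDiff (hv : ContDiff ℝ 2 v) :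
    ContDiff ℝ 2 (fun y => (v y) j) :=
  (EuclideanSpace.proj (𝕜 := ℝ) j).contDiff.comp hv

lemma acPhi_contDiff (hv : ContDiff ℝ 2 v) (hq : ContDiff ℝ 2 q) :
    ContDiff ℝ 1 (acPhi μ v q j) := by
  apply ContDiff.sub
  · apply ContDiff.add
    · exact (hq.of_le one_le_two).mul ((acPhi_coord_contDiff hv).of_le one_le_two)
    · exact (contDiff_const.mul (ContDiff.inner ℝ (hv.of_le one_le_two) (hv.of_le one_le_two))).mul
        ((acPhi_coord_contDiff hv).of_le one_le_two)
  · exact contDiff_const.mul (ContDiff.inner ℝ (hv.of_le one_le_two) (acPhi_deriv_contDiff hv))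

lemma acPhi_fderiv (hv : ContDiff ℝ 2 v) (hq : ContDiff ℝ 2 q)
    (x : EuclideanSpace ℝ (Fin 3)) :
    fderiv ℝ (acPhi μ v q j) x (EuclideanSpace.single j 1)
      = fderiv ℝ q x (EuclideanSpace.single j 1) * (v x) j
        + q x * fderiv ℝ v x (EuclideanSpace.single j 1) j
        + (⟪v x, fderiv ℝ v x (EuclideanSpace.single j 1)⟫
            + ⟪fderiv ℝ v x (EuclideanSpace.single j 1), v x⟫) / 2 * (v x) j
        + ⟪v x, v x⟫ / 2 * fderiv ℝ v x (EuclideanSpace.single j 1) j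
        - μ * (⟪v x, fderiv ℝ (fun y => fderiv ℝ v y (EuclideanSpace.single j 1)) x
                (EuclideanSpace.single j 1)⟫
              + ⟪fderiv ℝ v x (EuclideanSpace.single j 1), fderiv ℝ v x (EuclideanSpace.single j 1)⟫) := by
  have ha : HasFDerivAt v (fderiv ℝ v x) x := ((hv.differentiable two_ne_zero) x).hasFDerivAt
  have hqd : HasFDerivAt q (fderiv ℝ q x) x := ((hq.differentiable two_ne_zero) x).hasFDerivAt
  have haj : HasFDerivAt (fun y => (v y) j)
      ((EuclideanSpace.proj (𝕜 := ℝ) j).comp (fderiv ℝ v x)) x :=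
    (EuclideanSpace.proj (𝕜 := ℝ) j).hasFDerivAt.comp x ha
  have hb : HasFDerivAt (fun y => fderiv ℝ v y (EuclideanSpace.single j 1))
      (fderiv ℝ (fun y => fderiv ℝ v y (EuclideanSpace.single j 1)) x) x :=
    (((acPhi_deriv_contDiff hv (j := j)).differentiable one_ne_zero) x).hasFDerivAt
  have hd : HasFDerivAt (acPhi μ v q j) _ x :=
    ((hqd.mul haj).add (((ha.inner ℝ ha).const_mul (1/2:ℝ)).mul haj)).sub
      ((ha.inner ℝ hb).const_mul μ)
  rw [hd.fderiv]
  simp only [ContinuousLinearMap.coe_sub', Pi.sub_apply, ContinuousLinearMap.add_apply,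
    ContinuousLinearMap.coe_smul', Pi.smul_apply, ContinuousLinearMap.comp_apply,
    fderivInnerCLM_apply, ContinuousLinearMap.prod_apply, smul_eq_mul,
    PiLp.proj_apply]
  ring

variable {X : Type}


/-- Energy identity for the artificial compressibility system
`∂_t u + ∇p = μΔu − (u·∇)u − ½(div u)u`, `ε ∂_t p + div u = 0`:
`E(t) + μ ∫₀ᵗ∫ |∇u|² = E(0)` with `E(t) = ∫ (|u|²/2 + ε p²/2)`. -/
theorem stmt2 (ε μ T : ℝ) (hε : 0 < ε) (hμ : 0 < μ) (hT : 0 < T)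
    (u : ℝ → EuclideanSpace ℝ (Fin 3) → EuclideanSpace ℝ (Fin 3))
    (p : ℝ → EuclideanSpace ℝ (Fin 3) → ℝ)
    -- smoothness (C¹ in time, C² in space, jointly continuous derivatives)
    (hu : ContDiff ℝ 2 (fun q : ℝ × EuclideanSpace ℝ (Fin 3) => u q.1 q.2))
    (hp : ContDiff ℝ 2 (fun q : ℝ × EuclideanSpace ℝ (Fin 3) => p q.1 q.2))
    -- sufficient spatial decay (compact support, uniformly in time)
    (hsupp : ∃ K : Set (EuclideanSpace ℝ (Fin 3)), IsCompact K ∧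
      ∀ t x, x ∉ K → u t x = 0 ∧ p t x = 0)
    -- the momentum equation
    (hmom : ∀ t ∈ Icc (0:ℝ) T, ∀ x,
      deriv (fun s => u s x) t + gradient (p t) x =
        μ • (∑ j : Fin 3, fderiv ℝ (fun y => fderiv ℝ (u t) y (EuclideanSpace.single j 1)) x
              (EuclideanSpace.single j 1))
        - (∑ j : Fin 3, (u t x) j • fderiv ℝ (u t) x (EuclideanSpace.single j 1))
        - ((1:ℝ)/2 * ∑ j : Fin 3, fderiv ℝ (u t) x (EuclideanSpace.single j 1) j) • u t x)
    -- the artificial compressibility equation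
    (hcont : ∀ t ∈ Icc (0:ℝ) T, ∀ x,
      ε * deriv (fun s => p s x) t
        + ∑ j : Fin 3, fderiv ℝ (u t) x (EuclideanSpace.single j 1) j = 0) :
    ∀ t ∈ Icc (0:ℝ) T,
      (∫ x, (‖u t x‖ ^ 2 / 2 + ε * (p t x) ^ 2 / 2))
        + μ * ∫ s in (0:ℝ)..t, ∫ x,
            ∑ j : Fin 3, ‖fderiv ℝ (u s) x (EuclideanSpace.single j 1)‖ ^ 2
      = ∫ x, (‖u 0 x‖ ^ 2 / 2 + ε * (p 0 x) ^ 2 / 2) := by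
  classical
  obtain ⟨K, hK, hK0⟩ := hsupp
  set U : ℝ × EuclideanSpace ℝ (Fin 3) → EuclideanSpace ℝ (Fin 3) := fun q => u q.1 q.2 with hUdef
  set P : ℝ × EuclideanSpace ℝ (Fin 3) → ℝ := fun q => p q.1 q.2 with hPdef
  have hUd : Differentiable ℝ U := hu.differentiable two_ne_zero
  have hPd : Differentiable ℝ P := hp.differentiable two_ne_zero
  -- time derivatives as joint partial derivatives
  have hud : ∀ s x, HasDerivAt (fun r => u r x) (fderiv ℝ U (s, x) (1, 0)) s := fun s x =>
    (hUd (s, x)).hasFDerivAt.comp_hasDerivAt (l := U) s ((hasDerivAt_id' s).prodMk (hasDerivAt_const s x))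
  have hpd : ∀ s x, HasDerivAt (fun r => p r x) (fderiv ℝ P (s, x) (1, 0)) s := fun s x =>
    (hPd (s, x)).hasFDerivAt.comp_hasDerivAt (l := P) s ((hasDerivAt_id' s).prodMk (hasDerivAt_const s x))
  -- spatial derivatives as joint partial derivatives
  have hux : ∀ s x, HasFDerivAt (u s)
      ((fderiv ℝ U (s, x)).comp (ContinuousLinearMap.inr ℝ ℝ _)) x := fun s x =>
    (hUd (s, x)).hasFDerivAt.comp x (hasFDerivAt_prodMk_right s x)
  have hufe : ∀ s x (j : Fin 3), fderiv ℝ (u s) x (EuclideanSpace.single j 1)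
      = fderiv ℝ U (s, x) (0, EuclideanSpace.single j 1) := by
    intro s x j
    rw [(hux s x).fderiv]; rfl
  -- slice regularity
  have hut2 : ∀ s, ContDiff ℝ 2 (u s) := fun s => hu.comp (contDiff_const.prodMk contDiff_id)
  have hpt2 : ∀ s, ContDiff ℝ 2 (p s) := fun s => hp.comp (contDiff_const.prodMk contDiff_id)
  -- vanishing off K
  have hzu : ∀ s x, x ∉ K → u s x = 0 := fun s x h => (hK0 s x h).1
  have hzp : ∀ s x, x ∉ K → p s x = 0 := fun s x h => (hK0 s x h).2
  have hvanish : ∀ {G : Type} [NormedAddCommGroup G] [NormedSpace ℝ G]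
      (f : EuclideanSpace ℝ (Fin 3) → G), (∀ y ∉ K, f y = 0) →
      ∀ x ∉ K, fderiv ℝ f x = 0 := by
    intro G _ _ f hf x hx
    have hev : f =ᶠ[nhds x] fun _ => 0 :=
      Filter.eventually_of_mem (hK.isClosed.isOpen_compl.mem_nhds hx) fun y hy => hf y hy
    rw [hev.fderiv_eq]
    exact fderiv_const_apply 0
  have hfdu0 : ∀ s x, x ∉ K → fderiv ℝ (u s) x = 0 := fun s x hx =>
    hvanish (u s) (fun y hy => hzu s y hy) x hx
  -- continuity of joint derivatives
  have hUf : Continuous (fderiv ℝ U) := (hu.fderiv_right (m := 1) (by norm_num)).continuous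
  have hPf : Continuous (fderiv ℝ P) := (hp.fderiv_right (m := 1) (by norm_num)).continuous
  -- the time-derivative of the energy density
  set F' : ℝ → EuclideanSpace ℝ (Fin 3) → ℝ := fun s x =>
    ⟪u s x, fderiv ℝ U (s, x) (1, 0)⟫ + ε * (p s x * fderiv ℝ P (s, x) (1, 0)) with hF'def
  have hF'c : Continuous (fun q : ℝ × EuclideanSpace ℝ (Fin 3) => F' q.1 q.2) := by
    apply Continuous.add
    · exact (hu.continuous).inner ((hUf.clm_apply continuous_const))
    · exact continuous_const.mul ((hp.continuous).mul (hPf.clm_apply continuous_const))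
  have hF'K : ∀ s x, x ∉ K → F' s x = 0 := by
    intro s x hx; simp [hF'def, hzu s x hx, hzp s x hx]
  -- integrability of the dissipation integrand
  have hDcx : ∀ s, Continuous (fun x => ∑ j : Fin 3,
      ‖fderiv ℝ (u s) x (EuclideanSpace.single j 1)‖ ^ 2) := by
    intro s
    apply continuous_finset_sum
    intro j _
    exact ((((hut2 s).fderiv_right (m := 1) (by norm_num)).continuous.clm_apply
      continuous_const).norm).pow 2
  have hDint : ∀ s, Integrable (fun x => ∑ j : Fin 3,
      ‖fderiv ℝ (u s) x (EuclideanSpace.single j 1)‖ ^ 2) := by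
    intro s
    apply (hDcx s).integrable_of_hasCompactSupport
    apply HasCompactSupport.intro hK
    intro x hx
    simp [hfdu0 s x hx]
  set D : ℝ → ℝ := fun s => ∫ x, ∑ j : Fin 3,
      ‖fderiv ℝ (u s) x (EuclideanSpace.single j 1)‖ ^ 2 with hDdef
  -- continuity of the dissipation
  have hDcont : Continuous D := by
    have hGDc : Continuous (fun q : ℝ × EuclideanSpace ℝ (Fin 3) => ∑ j : Fin 3,
        ‖fderiv ℝ U q (0, EuclideanSpace.single j 1)‖ ^ 2) := by
      apply continuous_finset_sum
      intro j _
      exact ((hUf.clm_apply continuous_const).norm).pow 2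
    rw [continuous_iff_continuousAt]
    intro s₀
    obtain ⟨M, hM⟩ := (IsCompact.exists_bound_of_continuousOn (isCompact_Icc.prod hK)
      (hGDc.continuousOn (s := Icc (s₀ - 1) (s₀ + 1) ×ˢ K)))
    have hbi : Integrable (K.indicator fun _ => M) := by
      rw [integrable_indicator_iff hK.measurableSet]
      exact integrableOn_const hK.measure_lt_top.ne
    apply continuousAt_of_dominated (bound := K.indicator fun _ => M)
    · exact Filter.Eventually.of_forall fun r => ((hDcx r)).aestronglyMeasurable
    · filter_upwards [Metric.ball_mem_nhds s₀ one_pos] with r hr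
      apply Filter.Eventually.of_forall
      intro x
      by_cases hx : x ∈ K
      · rw [indicator_of_mem hx, Real.norm_of_nonneg (by positivity)]
        have : ∀ j : Fin 3, fderiv ℝ (u r) x (EuclideanSpace.single j 1)
            = fderiv ℝ U (r, x) (0, EuclideanSpace.single j 1) := fun j => hufe r x j
        simp only [this]
        have hrI : r ∈ Icc (s₀ - 1) (s₀ + 1) := by
          rw [Metric.mem_ball, Real.dist_eq, abs_lt] at hr
          constructor <;> linarith
        have := hM (r, x) (mem_prod.2 ⟨hrI, hx⟩)
        rwa [Real.norm_of_nonneg (by positivity)] at this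
      · rw [indicator_of_notMem hx]
        have : ∀ j : Fin 3, fderiv ℝ (u r) x (EuclideanSpace.single j 1) = 0 := by
          intro j; rw [hfdu0 r x hx]; rfl
        simp [this]
    · exact hbi
    · apply Filter.Eventually.of_forall
      intro x
      have heq : ∀ r, (∑ j : Fin 3, ‖fderiv ℝ (u r) x (EuclideanSpace.single j 1)‖ ^ 2)
          = ∑ j : Fin 3, ‖fderiv ℝ U (r, x) (0, EuclideanSpace.single j 1)‖ ^ 2 := by
        intro r; exact Finset.sum_congr rfl fun j _ => by rw [hufe r x j]
      simp only [heq]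
      exact (hGDc.comp (continuous_id.prodMk continuous_const)).continuousAt
  -- differentiation under the integral sign
  have hEderiv : ∀ t₀ : ℝ, HasDerivAt
      (fun r => ∫ x, (‖u r x‖ ^ 2 / 2 + ε * (p r x) ^ 2 / 2)) (∫ x, F' t₀ x) t₀ := by
    intro t₀
    have hcx : ∀ r, Continuous (fun x => ‖u r x‖ ^ 2 / 2 + ε * (p r x) ^ 2 / 2) := by
      intro r
      exact ((((hut2 r).continuous.norm.pow 2).div_const 2)).add
        ((continuous_const.mul ((hpt2 r).continuous.pow 2)).div_const 2)
    obtain ⟨M, hM⟩ := (IsCompact.exists_bound_of_continuousOn (isCompact_Icc.prod hK)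
      (hF'c.continuousOn (s := Icc (t₀ - 1) (t₀ + 1) ×ˢ K)))
    have hbi : Integrable (K.indicator fun _ => M) := by
      rw [integrable_indicator_iff hK.measurableSet]
      exact integrableOn_const hK.measure_lt_top.ne
    have main := hasDerivAt_integral_of_dominated_loc_of_deriv_le (μ := volume)
      (F := fun r x => ‖u r x‖ ^ 2 / 2 + ε * (p r x) ^ 2 / 2) (F' := F')
      (bound := K.indicator fun _ => M) (x₀ := t₀) (s := Metric.ball t₀ 1) (Metric.ball_mem_nhds t₀ one_pos)
      (Filter.Eventually.of_forall fun r => (hcx r).aestronglyMeasurable)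
      ?_ ?_ ?_ hbi ?_
    · exact main.2
    · apply (hcx t₀).integrable_of_hasCompactSupport
      apply HasCompactSupport.intro hK
      intro x hx
      simp [hzu t₀ x hx, hzp t₀ x hx]
    · have : Continuous (F' t₀) := hF'c.comp (continuous_const.prodMk continuous_id)
      exact this.aestronglyMeasurable
    · apply Filter.Eventually.of_forall
      intro x r hr
      by_cases hx : x ∈ K
      · rw [indicator_of_mem hx]
        have hrI : r ∈ Icc (t₀ - 1) (t₀ + 1) := by
          rw [Metric.mem_ball, Real.dist_eq, abs_lt] at hr
          constructor <;> linarith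
        exact hM (r, x) (mem_prod.2 ⟨hrI, hx⟩)
      · rw [indicator_of_notMem hx, hF'K r x hx, norm_zero]
    · apply Filter.Eventually.of_forall
      intro x r _
      have hA : HasDerivAt (fun r => ⟪u r x, u r x⟫ / 2)
          ((⟪u r x, fderiv ℝ U (r, x) (1, 0)⟫ + ⟪fderiv ℝ U (r, x) (1, 0), u r x⟫) / 2) r :=
        (HasDerivAt.inner ℝ (hud r x) (hud r x)).div_const 2
      have hB : HasDerivAt (fun r => ε * ((p r x) * (p r x) / 2))
          (ε * ((fderiv ℝ P (r, x) (1, 0) * p r x + p r x * fderiv ℝ P (r, x) (1, 0)) / 2)) r :=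
        (((hpd r x).mul (hpd r x)).div_const 2).const_mul ε
      have hC := hA.add hB
      have heqf : (fun r => ‖u r x‖ ^ 2 / 2 + ε * (p r x) ^ 2 / 2)
          = fun r => ⟪u r x, u r x⟫ / 2 + ε * ((p r x) * (p r x) / 2) := by
        funext r
        rw [real_inner_self_eq_norm_sq]
        ring
      rw [heqf]
      convert hC using 1
      · rfl
      rw [hF'def]
      simp only [real_inner_comm (u r x)]
      ring
  -- energy flux identity
  have hI : ∀ t ∈ Icc (0:ℝ) T, ∫ x, F' t x = -(μ * D t) := by
    intro t htT
    have hu2 := hut2 t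
    have hp2 := hpt2 t
    have hdecomp : ∀ w : EuclideanSpace ℝ (Fin 3),
        w = ∑ j : Fin 3, w j • (EuclideanSpace.single j (1:ℝ)) := by
      intro w
      refine PiLp.ext fun i => ?_
      rw [WithLp.ofLp_sum, Finset.sum_apply]
      simp [EuclideanSpace.single_apply, PiLp.smul_apply]
    have hΦzero : ∀ j : Fin 3, ∀ y, y ∉ K → acPhi μ (u t) (p t) j y = 0 := by
      intro j y hy; simp [acPhi, hzu t y hy, hzp t y hy]
    have hΦsupp : ∀ j : Fin 3, HasCompactSupport (acPhi μ (u t) (p t) j) := fun j =>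
      HasCompactSupport.intro hK (hΦzero j)
    have hΦint : ∀ j : Fin 3,
        Integrable (fun x => fderiv ℝ (acPhi μ (u t) (p t) j) x (EuclideanSpace.single j 1)) := by
      intro j
      apply Continuous.integrable_of_hasCompactSupport
      · exact ((acPhi_contDiff hu2 hp2).continuous_fderiv one_ne_zero).clm_apply continuous_const
      · apply HasCompactSupport.intro hK
        intro x hx
        rw [hvanish _ (fun y hy => hΦzero j y hy) x hx]
        rfl
    have hΦzeroint : ∀ j : Fin 3,
        ∫ x, fderiv ℝ (acPhi μ (u t) (p t) j) x (EuclideanSpace.single j 1) = 0 := fun j =>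
      aux_integral_fderiv_eq_zero (acPhi_contDiff hu2 hp2) (hΦsupp j) _
    have key : ∀ x, F' t x
        = -(∑ j : Fin 3, fderiv ℝ (acPhi μ (u t) (p t) j) x (EuclideanSpace.single j 1))
          - μ * ∑ j : Fin 3, ‖fderiv ℝ (u t) x (EuclideanSpace.single j 1)‖ ^ 2 := by
      intro x
      have hmom' := hmom t htT x
      have hcont' := hcont t htT x
      rw [(hud t x).deriv] at hmom'
      rw [(hpd t x).deriv] at hcont'
      have hmomEq : fderiv ℝ U (t, x) (1, 0)
          = μ • (∑ j : Fin 3, fderiv ℝ (fun y => fderiv ℝ (u t) y (EuclideanSpace.single j 1)) x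
                (EuclideanSpace.single j 1))
            - (∑ j : Fin 3, (u t x) j • fderiv ℝ (u t) x (EuclideanSpace.single j 1))
            - ((1:ℝ)/2 * ∑ j : Fin 3, fderiv ℝ (u t) x (EuclideanSpace.single j 1) j) • u t x
            - gradient (p t) x := by
        rw [← hmom']; abel
      have hgrad : ⟪u t x, gradient (p t) x⟫
          = ∑ j : Fin 3, (u t x) j * fderiv ℝ (p t) x (EuclideanSpace.single j 1) := by
        rw [real_inner_comm, gradient, InnerProductSpace.toDual_symm_apply]
        conv_lhs => rw [hdecomp (u t x)]
        rw [map_sum]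
        exact Finset.sum_congr rfl fun j _ => by
          rw [ContinuousLinearMap.map_smul, smul_eq_mul]
      have hεp : ε * (p t x * fderiv ℝ P (t, x) (1, 0))
          = p t x * (-∑ j : Fin 3, fderiv ℝ (u t) x (EuclideanSpace.single j 1) j) := by
        have : ε * fderiv ℝ P (t, x) (1, 0)
            = -∑ j : Fin 3, fderiv ℝ (u t) x (EuclideanSpace.single j 1) j := by linarith
        calc ε * (p t x * fderiv ℝ P (t, x) (1, 0))
            = p t x * (ε * fderiv ℝ P (t, x) (1, 0)) := by ring
          _ = _ := by rw [this]
      simp only [hF'def]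
      rw [hmomEq, hεp]
      simp only [inner_sub_right, inner_smul_right, inner_sum, hgrad,
        acPhi_fderiv hu2 hp2, ← real_inner_self_eq_norm_sq]
      simp only [Fin.sum_univ_three]
      simp only [real_inner_comm (u t x)]
      ring
    rw [integral_congr_ae (Filter.Eventually.of_forall key)]
    have hint1 : Integrable (fun x => -(∑ j : Fin 3,
        fderiv ℝ (acPhi μ (u t) (p t) j) x (EuclideanSpace.single j 1))) volume := by
      exact (integrable_finset_sum Finset.univ fun j _ => hΦint j).neg
    have hint2 : Integrable (fun x => μ * ∑ j : Fin 3,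
        ‖fderiv ℝ (u t) x (EuclideanSpace.single j 1)‖ ^ 2) volume := (hDint t).const_mul μ
    rw [integral_sub hint1 hint2]
    rw [integral_neg, integral_finset_sum _ (fun j _ => hΦint j), MeasureTheory.integral_const_mul]
    simp [hΦzeroint, hDdef]
  -- final assembly
  intro t ht
  have h0t : Icc (0:ℝ) t ⊆ Icc 0 T := Icc_subset_Icc le_rfl ht.2
  have h1 : ∀ s ∈ uIcc (0:ℝ) t,
      HasDerivAt (fun r => ∫ x, (‖u r x‖ ^ 2 / 2 + ε * (p r x) ^ 2 / 2)) (-(μ * D s)) s := by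
    intro s hs
    rw [uIcc_of_le ht.1] at hs
    exact (hI s (h0t hs)) ▸ hEderiv s
  have h2 : IntervalIntegrable (fun s => -(μ * D s)) volume 0 t :=
    ((continuous_const.mul hDcont).neg).intervalIntegrable 0 t
  have h3 := intervalIntegral.integral_eq_sub_of_hasDerivAt h1 h2
  have h4 : ∫ s in (0:ℝ)..t, -(μ * D s) = -(μ * ∫ s in (0:ℝ)..t, D s) := by
    rw [intervalIntegral.integral_neg, intervalIntegral.integral_const_mul]
  rw [h4] at h3
  have : μ * ∫ s in (0:ℝ)..t, D s = μ * ∫ s in (0:ℝ)..t, ∫ x, ∑ j : Fin 3,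
      ‖fderiv ℝ (u s) x (EuclideanSpace.single j 1)‖ ^ 2 := rfl
  linarith [h3]
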